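/- arXiv:2502.07769 — 2 statements merged into one kernel-verified Lean document; each statement's English description precedes it below -/
import Mathlib

section
/- Let G be a connected partially reflexive graph on a finite vertex set V and let v be a reflexive vertex with exactly two neighbours a ≠ b such that a and b are adjacent (so v lies in a triangle), i.e. N(v) = {a, b}, r(v,v) holds, and r(a,b) holds. Then G has a stable cut if and only if G − {v} has a stable cut. -/
/-- `S` is an independent set of the partially reflexive graph given by the
symmetric relation `r` (loops allowed): no two vertices of `S` are related
(in particular every vertex of `S` is irreflexive). -/
def PRIndep {V : Type*} (r : V → V → Prop) (S : Set V) : Prop :=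
  ∀ u ∈ S, ∀ v ∈ S, ¬ r u v

/-- `S` is a stable cut of the partially reflexive graph given by `r`: an
independent set whose removal disconnects the graph, i.e. the complement of `S`
splits into two nonempty sets `A`, `B` with no edges between them. -/
def PRStableCut {V : Type*} (r : V → V → Prop) (S : Set V) : Prop :=
  PRIndep r S ∧ ∃ A B : Set V, A.Nonempty ∧ B.Nonempty ∧ Disjoint A B ∧
    A ∪ B = Sᶜ ∧ ∀ a ∈ A, ∀ b ∈ B, ¬ r a b

/-- The partially reflexive graph given by `r` has a stable cut. -/
def HasPRStableCut {V : Type*} (r : V → V → Prop) : Prop :=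
  ∃ S : Set V, PRStableCut r S

/-!
A reflexive vertex never lies in a stable set, so in a stable cut of `G` it sits on one side,
together with every neighbour outside the cut set. Since the two neighbours `a`, `b` of `v` are
adjacent, at most one of them is in the cut set, so `v` is not alone on its side and removing it
leaves a stable cut of `G − v`. Conversely, in a stable cut of `G − v` the adjacent vertices
`a`, `b` cannot lie on opposite sides, so one side avoids both; adding `v` to the other side gives
a stable cut of `G`, as `a` and `b` are the only neighbours of `v`.
-/

def IsPRSeparation {V : Type*} (r : V → V → Prop) (S A B : Set V) : Prop :=
  A.Nonempty ∧ B.Nonempty ∧ Disjoint A B ∧ A ∪ B = Sᶜ ∧ ∀ a ∈ A, ∀ b ∈ B, ¬ r a b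

section

variable {V W : Type*} {r : V → V → Prop} {S A B : Set V}

theorem hasPRStableCut_iff :
    HasPRStableCut r ↔ ∃ S A B : Set V, PRIndep r S ∧ IsPRSeparation r S A B :=
  ⟨fun ⟨S, hS, A, B, hsep⟩ => ⟨S, A, B, hS, hsep⟩, fun ⟨S, A, B, hS, hsep⟩ => ⟨S, hS, A, B, hsep⟩⟩

theorem PRIndep.notMem_or_notMem (hS : PRIndep r S) {x y : V} (hxy : r x y) :
    x ∉ S ∨ y ∉ S := by
  by_contra! h
  exact hS x h.1 y h.2 hxy

theorem PRIndep.preimage (hS : PRIndep r S) (f : W → V) :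
    PRIndep (fun x y => r (f x) (f y)) (f ⁻¹' S) :=
  fun x hx y hy => hS (f x) hx (f y) hy

theorem PRIndep.image {S : Set W} (f : W → V) (hS : PRIndep (fun x y => r (f x) (f y)) S) :
    PRIndep r (f '' S) := by
  rintro _ ⟨x, hx, rfl⟩ _ ⟨y, hy, rfl⟩
  exact hS x hx y hy

namespace IsPRSeparation

theorem symm (hr : Symmetric r) (h : IsPRSeparation r S A B) : IsPRSeparation r S B A := by
  obtain ⟨hA, hB, hdisj, hcover, hsep⟩ := h
  exact ⟨hB, hA, hdisj.symm, Set.union_comm B A ▸ hcover,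
    fun x hx y hy hxy => hsep y hy x hx (hr hxy)⟩

theorem mem_or_mem (h : IsPRSeparation r S A B) {x : V} (hx : x ∉ S) : x ∈ A ∨ x ∈ B := by
  rw [← Set.mem_union, h.2.2.2.1]
  exact hx

theorem exists_mem_right_ne (h : IsPRSeparation r S A B) {x : V} (hx : x ∈ A) :
    ∃ y ∈ B, y ≠ x := by
  obtain ⟨y, hy⟩ := h.2.1
  exact ⟨y, hy, (h.2.2.1.ne_of_mem hx hy).symm⟩

theorem mem_left_of_adj (h : IsPRSeparation r S A B) {x y : V} (hx : x ∈ A) (hy : y ∉ S)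
    (hxy : r x y) : y ∈ A :=
  (h.mem_or_mem hy).resolve_right fun hyB => h.2.2.2.2 x hx y hyB hxy

theorem notMem_left_or_notMem_right_of_adj (hr : Symmetric r) (h : IsPRSeparation r S A B)
    {x y : V} (hxy : r x y) : (x ∉ A ∧ y ∉ A) ∨ (x ∉ B ∧ y ∉ B) := by
  obtain ⟨-, -, hdisj, -, hsep⟩ := h
  by_cases hxA : x ∈ A
  · exact .inr ⟨hdisj.notMem_of_mem_left hxA, fun hyB => hsep x hxA y hyB hxy⟩
  by_cases hyA : y ∈ A
  · exact .inr ⟨fun hxB => hsep y hyA x hxB (hr hxy), hdisj.notMem_of_mem_left hyA⟩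
  exact .inl ⟨hxA, hyA⟩

theorem restrict (h : IsPRSeparation r S A B) (p : V → Prop) (hA : ∃ x ∈ A, p x)
    (hB : ∃ y ∈ B, p y) :
    IsPRSeparation (fun x y : Subtype p => r x.val y.val)
      (Subtype.val ⁻¹' S) (Subtype.val ⁻¹' A) (Subtype.val ⁻¹' B) := by
  obtain ⟨-, -, hdisj, hcover, hsep⟩ := h
  obtain ⟨x, hxA, hx⟩ := hA
  obtain ⟨y, hyB, hy⟩ := hB
  refine ⟨⟨⟨x, hx⟩, hxA⟩, ⟨⟨y, hy⟩, hyB⟩, hdisj.preimage _, ?_,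
    fun x hx y hy => hsep x hx y hy⟩
  rw [← Set.preimage_union, hcover, Set.preimage_compl]

theorem insert_image_val {v : V} {S A B : Set {w : V // w ≠ v}}
    (h : IsPRSeparation (fun x y : {w : V // w ≠ v} => r x.val y.val) S A B)
    (hv : ∀ w ∈ B, ¬ r v w.val) :
    IsPRSeparation r (Subtype.val '' S) (insert v (Subtype.val '' A)) (Subtype.val '' B) := by
  obtain ⟨-, ⟨y, hyB⟩, hdisj, hcover, hsep⟩ := h
  have hval : Function.Injective (Subtype.val : {w : V // w ≠ v} → V) := Subtype.val_injective
  have hv_notMem {T : Set {w : V // w ≠ v}} : v ∉ Subtype.val '' T := fun ⟨w, _, hw⟩ => w.2 hw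
  refine ⟨Set.insert_nonempty _ _, ⟨y, y, hyB, rfl⟩, ?_, ?_, ?_⟩
  · exact Set.disjoint_insert_left.2 ⟨hv_notMem, (Set.disjoint_image_iff hval).2 hdisj⟩
  · ext x
    by_cases hx : x = v
    · subst hx
      simp only [Set.insert_union, Set.mem_insert_iff, Set.mem_compl_iff, true_or, true_iff]
      exact hv_notMem
    · rw [Set.insert_union, Set.mem_insert_iff, or_iff_right hx, ← Set.image_union, hcover,
        Set.mem_compl_iff]
      lift x to {w : V // w ≠ v} using hx
      rw [hval.mem_set_image, hval.mem_set_image, Set.mem_compl_iff]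
  · rintro _ (rfl | ⟨x, hx, rfl⟩) _ ⟨y, hy, rfl⟩
    · exact hv y hy
    · exact hsep x hx y hy

end IsPRSeparation

end

theorem stmt7_general {V : Type*} (r : V → V → Prop) (hsymm : Symmetric r)
    (v a b : V) (hloop : r v v) (hav : a ≠ v) (hbv : b ≠ v)
    (hadja : r v a) (hadjb : r v b) (hadjab : r a b)
    (hunique : ∀ w, w ≠ v → r w v → w = a ∨ w = b) :
    HasPRStableCut r ↔
      HasPRStableCut (fun x y : {w : V // w ≠ v} => r x.val y.val) := by
  rw [hasPRStableCut_iff, hasPRStableCut_iff]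
  constructor
  · rintro ⟨S, A, B, hS, hsep⟩
    have hvS : v ∉ S := fun h => hS v h v h hloop
    wlog hvA : v ∈ A generalizing A B
    · exact this B A (hsep.symm hsymm) ((hsep.mem_or_mem hvS).resolve_left hvA)
    have hA : ∃ x ∈ A, x ≠ v := by
      rcases hS.notMem_or_notMem hadjab with haS | hbS
      · exact ⟨a, hsep.mem_left_of_adj hvA haS hadja, hav⟩
      · exact ⟨b, hsep.mem_left_of_adj hvA hbS hadjb, hbv⟩
    exact ⟨_, _, _, hS.preimage _, hsep.restrict _ hA (hsep.exists_mem_right_ne hvA)⟩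
  · have hsymm' : Symmetric fun x y : {w : V // w ≠ v} => r x.val y.val := fun _ _ h => hsymm h
    rintro ⟨S, A, B, hS, hsep⟩
    wlog hB : ⟨a, hav⟩ ∉ B ∧ ⟨b, hbv⟩ ∉ B generalizing A B
    · exact this B A (hsep.symm hsymm')
        ((hsep.notMem_left_or_notMem_right_of_adj hsymm' hadjab).resolve_right hB)
    refine ⟨_, _, _, hS.image _, hsep.insert_image_val fun w hw hvw => ?_⟩
    rcases hunique w w.2 (hsymm hvw) with rfl | rfl
    exacts [hB.1 hw, hB.2 hw]

/-- Let `G` be a connected partially reflexive graph and let `v` be a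
reflexive vertex whose only neighbours are `a ≠ b`, with `a` and `b`
adjacent (so `v` lies in a triangle). Then `G` has a stable cut iff
`G − {v}` has a stable cut. -/
theorem stmt7 {V : Type*} [Fintype V] (r : V → V → Prop) (hsymm : Symmetric r)
    (hconn : (SimpleGraph.fromRel r).Connected)
    (v a b : V) (hloop : r v v) (hab : a ≠ b) (hav : a ≠ v) (hbv : b ≠ v)
    (hadja : r v a) (hadjb : r v b) (hadjab : r a b)
    (hunique : ∀ w, w ≠ v → r w v → w = a ∨ w = b) :
    HasPRStableCut r ↔
      HasPRStableCut (fun x y : {w : V // w ≠ v} => r x.val y.val) :=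
  stmt7_general r hsymm v a b hloop hav hbv hadja hadjb hadjab hunique
end

section
/- Let G be a finite simple graph that is H1-subgraph-free and let x, y, z, w be four distinct vertices forming a diamond: z and w are adjacent, each of x and y is adjacent to both z and w, and x and y are not adjacent. Then x has at most one neighbour outside {z, w}. -/
/-- The graph `H1`: vertices `c1 = 0`, `c2 = 1`, `p1 = 2`, `p2 = 3`,
`p3 = 4`, `p4 = 5`, with edges `c1c2`, `c1p1`, `c1p2`, `c2p3`, `c2p4`. -/
def H1 : SimpleGraph (Fin 6) :=
  SimpleGraph.fromRel (fun a b =>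
    (a = 0 ∧ b = 1) ∨ (a = 0 ∧ b = 2) ∨ (a = 0 ∧ b = 3) ∨
    (a = 1 ∧ b = 4) ∨ (a = 1 ∧ b = 5))

/-- `G` contains `H` as a subgraph: there is an injective map from the vertices
of `H` to those of `G` sending edges of `H` to edges of `G`. -/
def ContainsSubgraph {V W : Type*} (G : SimpleGraph V) (H : SimpleGraph W) : Prop :=
  ∃ f : W → V, Function.Injective f ∧ ∀ a b : W, H.Adj a b → G.Adj (f a) (f b)

/-! Two distinct neighbours `u, v` of `x` outside `{z, w}` give a copy of `H1`
with centres `x, z`, leaves `u, v` at `x` and `w, y` at `z`; `u, v ≠ y` because `y` is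
not adjacent to `x`. -/

theorem containsSubgraph_H1_of_adj {V : Type*} (G : SimpleGraph V) {c₁ c₂ p₁ p₂ p₃ p₄ : V}
    (hnodup : [c₁, c₂, p₁, p₂, p₃, p₄].Nodup) (hc : G.Adj c₁ c₂) (h₁ : G.Adj c₁ p₁)
    (h₂ : G.Adj c₁ p₂) (h₃ : G.Adj c₂ p₃) (h₄ : G.Adj c₂ p₄) :
    ContainsSubgraph G H1 := by
  refine ⟨![c₁, c₂, p₁, p₂, p₃, p₄], List.nodup_ofFn.mp hnodup, ?_⟩
  have hrel : ∀ a b : Fin 6, (a = 0 ∧ b = 1) ∨ (a = 0 ∧ b = 2) ∨ (a = 0 ∧ b = 3) ∨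
      (a = 1 ∧ b = 4) ∨ (a = 1 ∧ b = 5) →
      G.Adj (![c₁, c₂, p₁, p₂, p₃, p₄] a) (![c₁, c₂, p₁, p₂, p₃, p₄] b) := by
    rintro a b (⟨rfl, rfl⟩ | ⟨rfl, rfl⟩ | ⟨rfl, rfl⟩ | ⟨rfl, rfl⟩ | ⟨rfl, rfl⟩) <;> assumption
  rintro a b ⟨-, hab | hba⟩
  · exact hrel a b hab
  · exact (hrel b a hba).symm

theorem stmt11_general {V : Type*} (G : SimpleGraph V)
    (hfree : ¬ ContainsSubgraph G H1) (x y z w : V) (hxy : x ≠ y)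
    (hzw : G.Adj z w) (hxz : G.Adj x z) (hxw : G.Adj x w)
    (hyz : G.Adj y z) (hnxy : ¬ G.Adj x y) :
    {u | G.Adj x u ∧ u ≠ z ∧ u ≠ w}.Subsingleton := by
  rintro u ⟨hxu, huz, huw⟩ v ⟨hxv, hvz, hvw⟩
  by_contra huv
  have hne_y : ∀ {t}, G.Adj x t → t ≠ y := fun ht h => hnxy (h ▸ ht)
  refine hfree (containsSubgraph_H1_of_adj G ?_ hxz hxu hxv hzw hyz.symm)
  simp only [List.nodup_cons, List.mem_cons, List.not_mem_nil, or_false, not_or,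
    List.nodup_nil, and_true, not_false_eq_true]
  exact ⟨⟨hxz.ne, hxu.ne, hxv.ne, hxw.ne, hxy⟩, ⟨huz.symm, hvz.symm, hzw.ne, hyz.ne.symm⟩,
    ⟨huv, huw, hne_y hxu⟩, ⟨hvw, hne_y hxv⟩, hne_y hxw⟩

/-- In an `H1`-subgraph-free graph, if the distinct vertices `x, y, z, w` form
a diamond (`z` and `w` adjacent, `x` and `y` both adjacent to `z` and `w`,
`x` and `y` nonadjacent), then `x` has at most one neighbour outside
`{z, w}`. -/
theorem stmt11 {V : Type*} [Fintype V] (G : SimpleGraph V)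
    (hfree : ¬ ContainsSubgraph G H1) (x y z w : V) (hxy : x ≠ y)
    (hzw : G.Adj z w) (hxz : G.Adj x z) (hxw : G.Adj x w)
    (hyz : G.Adj y z) (hyw : G.Adj y w) (hnxy : ¬ G.Adj x y) :
    {u | G.Adj x u ∧ u ≠ z ∧ u ≠ w}.Subsingleton :=
  stmt11_general G hfree x y z w hxy hzw hxz hxw hyz hnxy
end
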